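/- arXiv:1512.09154 — 2 statements merged into one kernel-verified Lean document; each statement's English description precedes it below -/
import Mathlib

section
/- With R and I as above, for every integer m one has tᵐ − t^{m̄} ∈ I, where m̄ ∈ {0,1} is the residue of m modulo 2. -/
noncomputable section

abbrev R2 : Type := AddMonoidAlgebra ℤ (ℤ × ℤ)

def mono (n m : ℤ) : R2 := AddMonoidAlgebra.single (n, m) 1

def Igen : Set R2 :=
  {x | ∃ n : ℤ, x = mono n n - mono n 0} ∪
  {x | ∃ n m : ℤ, x = mono n m + mono (-n) (m - n)} ∪
  {x | ∃ n m : ℤ, x = mono n m + mono m n} ∪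
  {x | ∃ n m : ℤ, x = mono n m * (1 - mono 0 1) ^ 2}

def I : AddSubgroup R2 := AddSubgroup.closure Igen

abbrev A2 : Type := AddMonoidAlgebra (ZMod 2) (ZMod 2)

def tA (k : ZMod 2) : A2 := AddMonoidAlgebra.single k 1

def Jf (n m : ℤ) : ZMod 2 := ((n + n * m + m : ℤ) : ZMod 2)

def phi : R2 →ₗ[ℤ] A2 :=
  Finsupp.lsum ℤ (fun p : ℤ × ℤ => LinearMap.toSpanSingleton ℤ A2 (tA (Jf p.1 p.2))) ∘ₗ (AddMonoidAlgebra.coeffLinearEquiv ℤ).toLinearMap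

def epsA : A2 →ₐ[ZMod 2] ZMod 2 := (AddMonoidAlgebra.lift (ZMod 2) (ZMod 2) (ZMod 2)) 1

def ev1 : LaurentPolynomial ℤ →ₗ[ℤ] ℤ := Finsupp.lsum ℤ (fun _ => LinearMap.id) ∘ₗ (AddMonoidAlgebra.coeffLinearEquiv ℤ).toLinearMap

def lder : LaurentPolynomial ℤ →ₗ[ℤ] LaurentPolynomial ℤ :=
  Finsupp.lsum ℤ (fun n : ℤ =>
    LinearMap.toSpanSingleton ℤ (LaurentPolynomial ℤ) ((n : ℤ) • LaurentPolynomial.T (n - 1))) ∘ₗ (AddMonoidAlgebra.coeffLinearEquiv ℤ).toLinearMap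

def ev2 : R2 →ₗ[ℤ] ZMod 2 :=
  Finsupp.lsum ℤ (fun _ : ℤ × ℤ => LinearMap.toSpanSingleton ℤ (ZMod 2) 1) ∘ₗ (AddMonoidAlgebra.coeffLinearEquiv ℤ).toLinearMap

/-! Modulo `I`, the generators `sⁿtⁿ − sⁿ`, `sⁿtᵐ + sᵐtⁿ` give `2tᵏ ≡ −2sᵏ ≡ −2sᵏtᵏ ≡ 0`, so
`tᵐ(1 − t)² = tᵐ − 2tᵐ⁺¹ + tᵐ⁺² ∈ I` yields `tᵐ⁺² ≡ tᵐ`: the class of `tᵐ` is 2-periodic in `m`. -/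

theorem AddSubgroup.sub_emod_mem_of_forall_add_sub_mem {G : Type*} [AddCommGroup G]
    {H : AddSubgroup G} {f : ℤ → G} {c : ℤ} (hf : ∀ m, f (m + c) - f m ∈ H) (m : ℤ) :
    f m - f (m % c) ∈ H := by
  have hper : Function.Periodic (fun m => (f m : G ⧸ H)) c := fun m =>
    (QuotientAddGroup.eq_iff_sub_mem).mpr (hf m)
  rw [← QuotientAddGroup.eq_iff_sub_mem, Int.emod_def, mul_comm]
  simpa using (hper.sub_int_mul_eq (m / c)).symm

lemma mono_mul_mono (a b c d : ℤ) : mono a b * mono c d = mono (a + c) (b + d) := by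
  simp [mono, AddMonoidAlgebra.single_mul_single]

lemma mono_self_sub_mono_zero_mem (n : ℤ) : mono n n - mono n 0 ∈ I :=
  AddSubgroup.subset_closure (Or.inl (Or.inl (Or.inl ⟨n, rfl⟩)))

lemma mono_add_mono_swap_mem (n m : ℤ) : mono n m + mono m n ∈ I :=
  AddSubgroup.subset_closure (Or.inl (Or.inr ⟨n, m, rfl⟩))

lemma mono_mul_one_sub_sq_mem (n m : ℤ) : mono n m * (1 - mono 0 1) ^ 2 ∈ I :=
  AddSubgroup.subset_closure (Or.inr ⟨n, m, rfl⟩)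

lemma two_mul_mono_zero_mem (k : ℤ) : 2 * mono 0 k ∈ I := by
  have h : 2 * mono 0 k = 2 • (mono 0 k + mono k 0) + 2 • (mono k k - mono k 0)
      - (mono k k + mono k k) := by ring
  rw [h]
  exact sub_mem (add_mem (nsmul_mem (mono_add_mono_swap_mem 0 k) 2)
    (nsmul_mem (mono_self_sub_mono_zero_mem k) 2)) (mono_add_mono_swap_mem k k)

lemma mono_zero_add_two_sub_mem (m : ℤ) : mono 0 (m + 2) - mono 0 m ∈ I := by
  have h₁ : mono 0 m * mono 0 1 = mono 0 (m + 1) := by simp [mono_mul_mono]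
  have h₂ : mono 0 (m + 1) * mono 0 1 = mono 0 (m + 2) := by simp [mono_mul_mono, add_assoc]
  have h : mono 0 (m + 2) - mono 0 m
      = mono 0 m * (1 - mono 0 1) ^ 2 + 2 * mono 0 (m + 1) - 2 * mono 0 m := by
    linear_combination (2 - mono 0 1) * h₁ - h₂
  rw [h]
  exact sub_mem (add_mem (mono_mul_one_sub_sq_mem 0 m) (two_mul_mono_zero_mem _))
    (two_mul_mono_zero_mem m)

theorem stmt2 : ∀ m : ℤ, mono 0 m - mono 0 (m % 2) ∈ I :=
  AddSubgroup.sub_emod_mem_of_forall_add_sub_mem mono_zero_add_two_sub_mem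
end
end

section
/- The function φ from monomials of R to the group ring ℤ/2[C₂] (where C₂ = ⟨t : t² = 1⟩) given by φ(sⁿtᵐ) = t^{(n + nm + m) mod 2}, extended ℤ-linearly to R, annihilates every generator of I: namely φ(sⁿtⁿ − sⁿ) = 0, φ(sⁿtᵐ + s⁻ⁿtᵐ⁻ⁿ) = 0, φ(sⁿtᵐ + sᵐtⁿ) = 0, and φ(sⁿtᵐ(1−t)²) = 0 for all integers n, m. -/
noncomputable section

/-! Since `n + nm + m = (n + 1)(m + 1) - 1`, its parity is preserved by each substitution relating
the monomials of a generator. So `phi` sends each generator to `x ± x`, plus a term with even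
coefficient in the last case, and both vanish in characteristic 2. -/

lemma Jf_eq_cast (n m : ℤ) : Jf n m = (n : ZMod 2) + n * m + m := by
  simp only [Jf]; push_cast; rfl

lemma Jf_self (n : ℤ) : Jf n n = Jf n 0 := by
  simp only [Jf_eq_cast]; push_cast
  generalize (n : ZMod 2) = x; revert x; decide

lemma Jf_neg_sub (n m : ℤ) : Jf (-n) (m - n) = Jf n m := by
  simp only [Jf_eq_cast]; push_cast
  generalize (n : ZMod 2) = x; generalize (m : ZMod 2) = y; revert x y; decide

lemma Jf_comm (n m : ℤ) : Jf m n = Jf n m := by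
  simp only [Jf_eq_cast]; ring

lemma Jf_add_two (n m : ℤ) : Jf n (m + 2) = Jf n m := by
  simp only [Jf_eq_cast]; push_cast
  generalize (n : ZMod 2) = x; generalize (m : ZMod 2) = y; revert x y; decide

lemma phi_apply_mono (n m : ℤ) : phi (mono n m) = tA (Jf n m) := by
  simp [phi, mono]

lemma phi_mono_add_mono_of_Jf_eq {a b c d : ℤ} (h : Jf a b = Jf c d) :
    phi (mono a b + mono c d) = 0 := by
  rw [map_add, phi_apply_mono, phi_apply_mono, h, ZModModule.add_self]

lemma mono_mul_one_sub_sq (n m : ℤ) :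
    mono n m * (1 - mono 0 1) ^ 2 = mono n m + mono n (m + 2) - 2 • mono n (m + 1) := by
  calc mono n m * (1 - mono 0 1) ^ 2
      = mono n m + mono n m * mono 0 1 * mono 0 1 - 2 • (mono n m * mono 0 1) := by
        rw [nsmul_eq_mul]; ring
    _ = mono n m + mono n (m + 2) - 2 • mono n (m + 1) := by
        simp only [mono_mul_mono, add_zero, add_assoc, one_add_one_eq_two]

theorem stmt6 : ∀ n m : ℤ,
    phi (mono n n - mono n 0) = 0 ∧
    phi (mono n m + mono (-n) (m - n)) = 0 ∧
    phi (mono n m + mono m n) = 0 ∧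
    phi (mono n m * (1 - mono 0 1) ^ 2) = 0 := by
  intro n m
  refine ⟨?_, ?_, ?_, ?_⟩
  · rw [map_sub, phi_apply_mono, phi_apply_mono, Jf_self, sub_self]
  · exact phi_mono_add_mono_of_Jf_eq (Jf_neg_sub n m).symm
  · exact phi_mono_add_mono_of_Jf_eq (Jf_comm n m).symm
  · rw [mono_mul_one_sub_sq, map_sub, map_nsmul,
      phi_mono_add_mono_of_Jf_eq (Jf_add_two n m).symm, ZModModule.char_nsmul_eq_zero, sub_zero]
end
end
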